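/- The assignment sending σ_i to Id_{i-1} ⊕ [[0,1],[t,0]] ⊕ Id_{n−i−1} and τ_i to Id_{i-1} ⊕ [[0,1],[1,0]] ⊕ Id_{n−i−1} satisfies all the defining relations of the welded braid group wB_n, hence defines a group homomorphism TYM : wB_n → GL_n(ℤ[t^{±1}]) (the Tong-Yang-Ma representation). -/

import Mathlib

open FreeGroup LaurentPolynomial

/-- The free-group letter corresponding to the braid generator `σ_i` (0-indexed). -/
def wsig (i : ℕ) : FreeGroup (ℕ ⊕ ℕ) := FreeGroup.of (Sum.inl i)

/-- The free-group letter corresponding to the permutation generator `τ_i` (0-indexed). -/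
def wtau (i : ℕ) : FreeGroup (ℕ ⊕ ℕ) := FreeGroup.of (Sum.inr i)

/-- Defining relations of the welded braid group `wB n`, with generators
`σ_i, τ_i` for `i+2 ≤ n` (0-indexed version of `i ∈ {1,…,n-1}`). -/
def weldedRels (n : ℕ) : Set (FreeGroup (ℕ ⊕ ℕ)) :=
  { r | (∃ i k, i + 2 ≤ k ∧ k + 2 ≤ n ∧ r = wsig i * wsig k * (wsig k * wsig i)⁻¹)
      ∨ (∃ i, i + 3 ≤ n ∧
          r = wsig i * wsig (i+1) * wsig i * (wsig (i+1) * wsig i * wsig (i+1))⁻¹)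
      ∨ (∃ i k, i + 2 ≤ k ∧ k + 2 ≤ n ∧ r = wtau i * wtau k * (wtau k * wtau i)⁻¹)
      ∨ (∃ i, i + 3 ≤ n ∧
          r = wtau i * wtau (i+1) * wtau i * (wtau (i+1) * wtau i * wtau (i+1))⁻¹)
      ∨ (∃ i, i + 2 ≤ n ∧ r = wtau i * wtau i)
      ∨ (∃ i k, (i + 2 ≤ k ∨ k + 2 ≤ i) ∧ i + 2 ≤ n ∧ k + 2 ≤ n ∧
          r = wsig i * wtau k * (wtau k * wsig i)⁻¹)
      ∨ (∃ i, i + 3 ≤ n ∧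
          r = wtau i * wsig (i+1) * wsig i * (wsig (i+1) * wsig i * wtau (i+1))⁻¹)
      ∨ (∃ i, i + 3 ≤ n ∧
          r = wsig i * wtau (i+1) * wtau i * (wtau (i+1) * wtau i * wsig (i+1))⁻¹) }

/-- The welded braid group on `n` strands, by its standard presentation. -/
abbrev wB (n : ℕ) : Type := PresentedGroup (weldedRels n)

/-- The braid generator `σ_i` of `wB n` (0-indexed). -/
def wσ {n : ℕ} (i : ℕ) : wB n := PresentedGroup.of (Sum.inl i)

/-- The permutation generator `τ_i` of `wB n` (0-indexed). -/
def wτ {n : ℕ} (i : ℕ) : wB n := PresentedGroup.of (Sum.inr i)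

/-- The Burau matrix of `σ_i` : `Id_{i-1} ⊕ [[0,t],[1,1-t]] ⊕ Id_{n-i-1}`. -/
noncomputable def burS (n i : ℕ) : Matrix (Fin n) (Fin n) (LaurentPolynomial ℤ) :=
  Matrix.of fun j k =>
    if (j : ℕ) = i ∧ (k : ℕ) = i then 0
    else if (j : ℕ) = i ∧ (k : ℕ) = i + 1 then T 1
    else if (j : ℕ) = i + 1 ∧ (k : ℕ) = i then 1
    else if (j : ℕ) = i + 1 ∧ (k : ℕ) = i + 1 then 1 - T 1
    else if (j : ℕ) = (k : ℕ) then 1 else 0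

/-- The block permutation matrix `Id_{i-1} ⊕ [[0,1],[1,0]] ⊕ Id_{n-i-1}`. -/
noncomputable def permT (n i : ℕ) : Matrix (Fin n) (Fin n) (LaurentPolynomial ℤ) :=
  Matrix.of fun j k =>
    if (j : ℕ) = i ∧ (k : ℕ) = i then 0
    else if (j : ℕ) = i ∧ (k : ℕ) = i + 1 then 1
    else if (j : ℕ) = i + 1 ∧ (k : ℕ) = i then 1
    else if (j : ℕ) = i + 1 ∧ (k : ℕ) = i + 1 then 0
    else if (j : ℕ) = (k : ℕ) then 1 else 0

/-- The Tong-Yang-Ma matrix of `σ_i` : `Id_{i-1} ⊕ [[0,1],[t,0]] ⊕ Id_{n-i-1}`. -/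
noncomputable def tymS (n i : ℕ) : Matrix (Fin n) (Fin n) (LaurentPolynomial ℤ) :=
  Matrix.of fun j k =>
    if (j : ℕ) = i ∧ (k : ℕ) = i then 0
    else if (j : ℕ) = i ∧ (k : ℕ) = i + 1 then 1
    else if (j : ℕ) = i + 1 ∧ (k : ℕ) = i then T 1
    else if (j : ℕ) = i + 1 ∧ (k : ℕ) = i + 1 then 0
    else if (j : ℕ) = (k : ℕ) then 1 else 0

noncomputable section Mono

abbrev R := LaurentPolynomial ℤ

/-- the unit `t`. -/
def tU : Rˣ where
  val := T 1
  inv := T (-1)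
  val_inv := by rw [← T_add]; norm_num
  inv_val := by rw [← T_add]; norm_num

variable {n : ℕ}

/-- monomial matrix -/
def mono (σ : Equiv.Perm (Fin n)) (d : Fin n → Rˣ) : Matrix (Fin n) (Fin n) R :=
  Matrix.of fun j k => if σ j = k then (d j : R) else 0

theorem mono_mul (σ σ' : Equiv.Perm (Fin n)) (d d' : Fin n → Rˣ) :
    mono σ d * mono σ' d' = mono (σ.trans σ') (fun j => d j * d' (σ j)) := by
  ext j k : 1
  simp only [mono, Matrix.mul_apply, Matrix.of_apply]
  rw [Finset.sum_eq_single (σ j)]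
  · simp [Equiv.trans_apply, mul_ite]; congr
  · intro l _ hl; simp [Ne.symm hl]
  · simp

theorem mono_eq_one (σ : Equiv.Perm (Fin n)) (d : Fin n → Rˣ)
    (hσ : σ = Equiv.refl (Fin n)) (hd : ∀ j, d j = 1) : mono σ d = 1 := by
  subst hσ
  ext j k
  simp [mono, hd, Matrix.one_apply]

theorem mono_one : mono (Equiv.refl (Fin n)) 1 = 1 :=
  mono_eq_one _ _ rfl fun _ => rfl

/-- monomial matrix as a unit in GL. -/
def monoU (σ : Equiv.Perm (Fin n)) (d : Fin n → Rˣ) :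
    Matrix.GeneralLinearGroup (Fin n) R where
  val := mono σ d
  inv := mono σ.symm (fun j => (d (σ.symm j))⁻¹)
  val_inv := by
    rw [mono_mul]
    exact mono_eq_one _ _ (Equiv.self_trans_symm σ) fun j => by simp
  inv_val := by
    rw [mono_mul]
    exact mono_eq_one _ _ (Equiv.symm_trans_self σ) fun j => by simp

theorem monoU_mul (σ σ' : Equiv.Perm (Fin n)) (d d' : Fin n → Rˣ) :
    monoU σ d * monoU σ' d' = monoU (σ.trans σ') (fun j => d j * d' (σ j)) := by
  apply Units.ext
  exact mono_mul σ σ' d d'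

theorem monoU_one : monoU (Equiv.refl (Fin n)) 1 = 1 := by
  apply Units.ext
  exact mono_one

end Mono

noncomputable section Gens
open Equiv

theorem monoU_eq {n : ℕ} {σ σ' : Equiv.Perm (Fin n)} {d d' : Fin n → Rˣ}
    (hσ : σ = σ') (hd : ∀ j, d j = d' j) : monoU σ d = monoU σ' d' := by
  subst hσ; exact congrArg _ (funext hd)

theorem monoU_eq_one {n : ℕ} {σ : Equiv.Perm (Fin n)} {d : Fin n → Rˣ}
    (hσ : σ = Equiv.refl (Fin n)) (hd : ∀ j, d j = 1) : monoU σ d = 1 :=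
  (monoU_eq hσ hd).trans monoU_one

/-- `t` in slot `x`, `1` elsewhere. -/
def du {n : ℕ} (x : Fin n) : Fin n → Rˣ := fun j => if j = x then tU else 1

def genS (n i : ℕ) : Matrix.GeneralLinearGroup (Fin n) R :=
  if h : i + 2 ≤ n then
    monoU (Equiv.swap ⟨i, by omega⟩ ⟨i+1, by omega⟩) (du ⟨i+1, by omega⟩) else 1

def genT (n i : ℕ) : Matrix.GeneralLinearGroup (Fin n) R :=
  if h : i + 2 ≤ n then
    monoU (Equiv.swap ⟨i, by omega⟩ ⟨i+1, by omega⟩) 1 else 1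

theorem genS_eq {n i : ℕ} (h : i + 2 ≤ n) :
    genS n i = monoU (Equiv.swap ⟨i, by omega⟩ ⟨i+1, by omega⟩) (du ⟨i+1, by omega⟩) :=
  dif_pos h

theorem genT_eq {n i : ℕ} (h : i + 2 ≤ n) :
    genT n i = monoU (Equiv.swap ⟨i, by omega⟩ ⟨i+1, by omega⟩) 1 :=
  dif_pos h

theorem braid_swap {α : Type*} [DecidableEq α] {a b c : α}
    (hab : a ≠ b) (hac : a ≠ c) (hbc : b ≠ c)
    (hba : b ≠ a) (hca : c ≠ a) (hcb : c ≠ b) :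
    ((Equiv.swap a b).trans (Equiv.swap b c)).trans (Equiv.swap a b) =
    ((Equiv.swap b c).trans (Equiv.swap a b)).trans (Equiv.swap b c) := by
  apply Equiv.ext; intro x
  by_cases h1 : x = a <;> by_cases h2 : x = b <;> by_cases h3 : x = c <;>
    simp_all [Equiv.swap_apply_def]

theorem comm_swap {α : Type*} [DecidableEq α] {a b c d : α}
    (hac : a ≠ c) (had : a ≠ d) (hbc : b ≠ c) (hbd : b ≠ d)
    (hca : c ≠ a) (hda : d ≠ a) (hcb : c ≠ b) (hdb : d ≠ b) :
    (Equiv.swap a b).trans (Equiv.swap c d) =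
    (Equiv.swap c d).trans (Equiv.swap a b) := by
  apply Equiv.ext; intro x
  by_cases h1 : x = a <;> by_cases h2 : x = b <;> by_cases h3 : x = c <;>
    by_cases h4 : x = d <;> simp_all [Equiv.swap_apply_def]

end Gens

theorem finNe {n : ℕ} {p q : ℕ} (hp : p < n) (hq : q < n) (h : p ≠ q) :
    (⟨p, hp⟩ : Fin n) ≠ ⟨q, hq⟩ := by simpa [Fin.ext_iff] using h



theorem rels_hold (n : ℕ) : ∀ r ∈ weldedRels n,
    (FreeGroup.lift (Sum.elim (genS n) (genT n))) r = 1 := by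
  intro r hr
  simp only [weldedRels, Set.mem_setOf_eq] at hr
  obtain ⟨i,k,hik,hk,rfl⟩|⟨i,hi,rfl⟩|⟨i,k,hik,hk,rfl⟩|⟨i,hi,rfl⟩|⟨i,hi,rfl⟩|
    ⟨i,k,hik,hi,hk,rfl⟩|⟨i,hi,rfl⟩|⟨i,hi,rfl⟩ := hr <;>
    simp only [_root_.map_mul, _root_.map_inv, wsig, wtau, FreeGroup.lift_apply_of, Sum.elim_inl, Sum.elim_inr]
  -- 1 : σ_i σ_k = σ_k σ_i
  · rw [mul_inv_eq_one, genS_eq (show i+2 ≤ n by omega), genS_eq (show k+2 ≤ n by omega),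
      monoU_mul, monoU_mul]
    refine monoU_eq (comm_swap (finNe _ _ (by omega)) (finNe _ _ (by omega))
      (finNe _ _ (by omega)) (finNe _ _ (by omega)) (finNe _ _ (by omega))
      (finNe _ _ (by omega)) (finNe _ _ (by omega)) (finNe _ _ (by omega))) ?_
    intro j
    simp only [du, Equiv.trans_apply, Equiv.swap_apply_def, Fin.ext_iff,
      apply_ite (Fin.val (n := n)), one_mul, mul_one, Pi.one_apply]
    split_ifs <;> first | rfl | omega | simp
  -- 2 : braid for σ
  · rw [mul_inv_eq_one, genS_eq (show i+2 ≤ n by omega), genS_eq (show i+1+2 ≤ n by omega),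
      monoU_mul, monoU_mul, monoU_mul, monoU_mul]
    refine monoU_eq (braid_swap (finNe _ _ (by omega)) (finNe _ _ (by omega))
      (finNe _ _ (by omega)) (finNe _ _ (by omega)) (finNe _ _ (by omega))
      (finNe _ _ (by omega))) ?_
    intro j
    simp only [du, Equiv.trans_apply, Equiv.swap_apply_def, Fin.ext_iff,
      apply_ite (Fin.val (n := n)), one_mul, mul_one, Pi.one_apply]
    split_ifs <;> first | rfl | omega | simp
  -- 3 : τ_i τ_k = τ_k τ_i
  · rw [mul_inv_eq_one, genT_eq (show i+2 ≤ n by omega), genT_eq (show k+2 ≤ n by omega),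
      monoU_mul, monoU_mul]
    refine monoU_eq (comm_swap (finNe _ _ (by omega)) (finNe _ _ (by omega))
      (finNe _ _ (by omega)) (finNe _ _ (by omega)) (finNe _ _ (by omega))
      (finNe _ _ (by omega)) (finNe _ _ (by omega)) (finNe _ _ (by omega))) ?_
    intro j; simp
  -- 4 : braid for τ
  · rw [mul_inv_eq_one, genT_eq (show i+2 ≤ n by omega), genT_eq (show i+1+2 ≤ n by omega),
      monoU_mul, monoU_mul, monoU_mul, monoU_mul]
    refine monoU_eq (braid_swap (finNe _ _ (by omega)) (finNe _ _ (by omega))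
      (finNe _ _ (by omega)) (finNe _ _ (by omega)) (finNe _ _ (by omega))
      (finNe _ _ (by omega))) ?_
    intro j; simp
  -- 5 : τ_i² = 1
  · rw [genT_eq (show i+2 ≤ n by omega), monoU_mul]
    exact monoU_eq_one (Equiv.swap_swap _ _) (fun j => by simp)
  -- 6 : σ_i τ_k commute
  · rw [mul_inv_eq_one, genS_eq (show i+2 ≤ n by omega), genT_eq (show k+2 ≤ n by omega),
      monoU_mul, monoU_mul]
    refine monoU_eq (comm_swap (finNe _ _ (by omega)) (finNe _ _ (by omega))
      (finNe _ _ (by omega)) (finNe _ _ (by omega)) (finNe _ _ (by omega))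
      (finNe _ _ (by omega)) (finNe _ _ (by omega)) (finNe _ _ (by omega))) ?_
    intro j
    simp only [du, Equiv.trans_apply, Equiv.swap_apply_def, Fin.ext_iff,
      apply_ite (Fin.val (n := n)), one_mul, mul_one, Pi.one_apply]
    split_ifs <;> first | rfl | omega | simp
  -- 7 : τ_i σ_{i+1} σ_i = σ_{i+1} σ_i τ_{i+1}
  · rw [mul_inv_eq_one, genS_eq (show i+2 ≤ n by omega), genS_eq (show i+1+2 ≤ n by omega),
      genT_eq (show i+2 ≤ n by omega), genT_eq (show i+1+2 ≤ n by omega),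
      monoU_mul, monoU_mul, monoU_mul, monoU_mul]
    refine monoU_eq (braid_swap (finNe _ _ (by omega)) (finNe _ _ (by omega))
      (finNe _ _ (by omega)) (finNe _ _ (by omega)) (finNe _ _ (by omega))
      (finNe _ _ (by omega))) ?_
    intro j
    simp only [du, Equiv.trans_apply, Equiv.swap_apply_def, Fin.ext_iff,
      apply_ite (Fin.val (n := n)), one_mul, mul_one, Pi.one_apply]
    split_ifs <;> first | rfl | omega | simp
  -- 8 : σ_i τ_{i+1} τ_i = τ_{i+1} τ_i σ_{i+1}
  · rw [mul_inv_eq_one, genS_eq (show i+2 ≤ n by omega), genS_eq (show i+1+2 ≤ n by omega),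
      genT_eq (show i+2 ≤ n by omega), genT_eq (show i+1+2 ≤ n by omega),
      monoU_mul, monoU_mul, monoU_mul, monoU_mul]
    refine monoU_eq (braid_swap (finNe _ _ (by omega)) (finNe _ _ (by omega))
      (finNe _ _ (by omega)) (finNe _ _ (by omega)) (finNe _ _ (by omega))
      (finNe _ _ (by omega))) ?_
    intro j
    simp only [du, Equiv.trans_apply, Equiv.swap_apply_def, Fin.ext_iff,
      apply_ite (Fin.val (n := n)), one_mul, mul_one, Pi.one_apply]
    split_ifs <;> first | rfl | omega | simp

theorem mono_eq_tymS {n i : ℕ} (h : i + 2 ≤ n) :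
    mono (Equiv.swap ⟨i, by omega⟩ ⟨i+1, by omega⟩) (du ⟨i+1, by omega⟩) = tymS n i := by
  ext j k
  simp only [mono, tymS, du, Matrix.of_apply, Equiv.swap_apply_def, Fin.ext_iff,
    apply_ite (Fin.val (n := n)), apply_ite (Units.val (α := R))]
  split_ifs <;> first | rfl | omega | simp [tU]

theorem mono_eq_permT {n i : ℕ} (h : i + 2 ≤ n) :
    mono (Equiv.swap ⟨i, by omega⟩ ⟨i+1, by omega⟩) (1 : Fin n → Rˣ) = permT n i := by
  ext j k
  simp only [mono, permT, Matrix.of_apply, Equiv.swap_apply_def, Fin.ext_iff,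
    apply_ite (Fin.val (n := n)), Pi.one_apply, Units.val_one]
  split_ifs <;> first | rfl | omega

/-- The Tong-Yang-Ma representation of the welded braid group: the matrix assignment
satisfies all defining relations of `wB n`, hence defines a group homomorphism
`TYM : wB n → GL_n(ℤ[t^{±1}])`. -/
theorem tong_yang_ma_representation_of_welded_braid_group (n : ℕ) :
    ∃ f : wB n →* Matrix.GeneralLinearGroup (Fin n) (LaurentPolynomial ℤ),
      ∀ i : ℕ, i + 2 ≤ n →
        ((f (wσ i) : Matrix (Fin n) (Fin n) (LaurentPolynomial ℤ)) = tymS n i ∧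
         (f (wτ i) : Matrix (Fin n) (Fin n) (LaurentPolynomial ℤ)) = permT n i) := by
  refine ⟨PresentedGroup.toGroup (rels_hold n), fun i hi => ⟨?_, ?_⟩⟩
  · rw [wσ, PresentedGroup.toGroup.of]
    show ((genS n i : Matrix.GeneralLinearGroup (Fin n) R) : Matrix (Fin n) (Fin n) R) = _
    rw [genS_eq hi]
    exact mono_eq_tymS hi
  · rw [wτ, PresentedGroup.toGroup.of]
    show ((genT n i : Matrix.GeneralLinearGroup (Fin n) R) : Matrix (Fin n) (Fin n) R) = _
    rw [genT_eq hi]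
    exact mono_eq_permT hi
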